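/- Let 𝒰 be a unitary system, ψ, η complete wandering vectors, and V the unique unitary in C_ψ(𝒰) with Vψ = η. If for some 0 < α < π/2 the vector cos α · ψ + i sin α · η is again a complete wandering vector for 𝒰, then V² = I. -/
import Mathlib

open scoped InnerProductSpace


variable {H : Type*} [NormedAddCommGroup H] [InnerProductSpace ℂ H] [CompleteSpace H]

/-- `ψ` is a complete wandering vector for `𝒰`. -/
def IsCompleteWandering (𝒰 : Set (H →L[ℂ] H)) (ψ : H) : Prop :=
  Orthonormal ℂ (fun U : 𝒰 => (U : H →L[ℂ] H) ψ) ∧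
    (Submodule.span ℂ ((fun U : H →L[ℂ] H => U ψ) '' 𝒰)).topologicalClosure = ⊤

/-- Let `ψ, η` be complete wandering vectors for a unitary system `𝒰`, and `V` the unitary in
the local commutant `C_ψ(𝒰)` with `Vψ = η`.  If for some `0 < α < π/2` the vector
`cos α · ψ + i sin α · η` is again a complete wandering vector for `𝒰`, then `V² = I`. -/
theorem stmt_8 (𝒰 : Set (H →L[ℂ] H)) (h1 : (1 : H →L[ℂ] H) ∈ 𝒰)
    (hunit : ∀ W ∈ 𝒰, W ∈ unitary (H →L[ℂ] H))
    (ψ η : H) (hψ : IsCompleteWandering 𝒰 ψ) (hη : IsCompleteWandering 𝒰 η)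
    (V : H →L[ℂ] H) (hV : V ∈ unitary (H →L[ℂ] H))
    (hVloc : ∀ U ∈ 𝒰, (V * U - U * V) ψ = 0) (hVψ : V ψ = η)
    (α : ℝ) (hα0 : 0 < α) (hα1 : α < Real.pi / 2)
    (hρ : IsCompleteWandering 𝒰
      ((Real.cos α : ℂ) • ψ + (Complex.I * (Real.sin α : ℂ)) • η)) :
    V * V = 1 := by
  classical
  have pi_pos := Real.pi_pos
  have hc : Real.cos α ≠ 0 :=
    ne_of_gt (Real.cos_pos_of_mem_Ioo ⟨by linarith, hα1⟩)
  have hs : Real.sin α ≠ 0 :=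
    ne_of_gt (Real.sin_pos_of_pos_of_lt_pi hα0 (by linarith))
  have hc' : (Real.cos α : ℂ) ≠ 0 := by exact_mod_cast hc
  have hs' : (Real.sin α : ℂ) ≠ 0 := by exact_mod_cast hs
  -- V maps U ψ to U η
  have hVU : ∀ U ∈ 𝒰, V (U ψ) = U η := by
    intro U hU
    have := hVloc U hU
    simp only [ContinuousLinearMap.sub_apply, ContinuousLinearMap.mul_apply] at this
    rw [sub_eq_zero] at this
    rw [this, hVψ]
  -- key symmetry
  have key : ∀ U ∈ 𝒰, ∀ U' ∈ 𝒰, ⟪U ψ, U' η⟫_ℂ = ⟪U η, U' ψ⟫_ℂ := by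
    intro U hU U' hU'
    have h0 := orthonormal_iff_ite.mp hρ.1 ⟨U, hU⟩ ⟨U', hU'⟩
    have hpp := orthonormal_iff_ite.mp hψ.1 ⟨U, hU⟩ ⟨U', hU'⟩
    have hee := orthonormal_iff_ite.mp hη.1 ⟨U, hU⟩ ⟨U', hU'⟩
    simp only [map_add, map_smul] at h0
    simp only [inner_add_left, inner_add_right, inner_smul_left, inner_smul_right,
      map_mul, Complex.conj_I, Complex.conj_ofReal] at h0
    rw [hpp, hee] at h0
    set t : ℂ := if (⟨U, hU⟩ : 𝒰) = ⟨U', hU'⟩ then 1 else 0 with ht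
    have hsc : (Real.sin α : ℂ) ^ 2 + (Real.cos α : ℂ) ^ 2 = 1 := by
      exact_mod_cast congrArg (Complex.ofReal) (Real.sin_sq_add_cos_sq α)
    have h2 : Complex.I * (Real.cos α : ℂ) * (Real.sin α : ℂ) *
        (⟪U ψ, U' η⟫_ℂ - ⟪U η, U' ψ⟫_ℂ) = 0 := by
      linear_combination h0 + t * (Real.sin α : ℂ) ^ 2 * Complex.I_sq - t * hsc
    have hA : Complex.I * (Real.cos α : ℂ) * (Real.sin α : ℂ) ≠ 0 := by
      exact mul_ne_zero (mul_ne_zero Complex.I_ne_zero hc') hs'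
    exact sub_eq_zero.mp ((mul_eq_zero.mp h2).resolve_left hA)
  -- adjoint V = V
  have hadj : ContinuousLinearMap.adjoint V = V := by
    have hdense : Dense ((Submodule.span ℂ ((fun U : H →L[ℂ] H => U ψ) '' 𝒰) : Submodule ℂ H) : Set H) := by
      exact Submodule.dense_iff_topologicalClosure_eq_top.mpr hψ.2
    apply ContinuousLinearMap.ext_on hdense
    rintro x ⟨U', hU', rfl⟩
    -- show adjoint V (U' ψ) = V (U' ψ)
    have horth : ContinuousLinearMap.adjoint V (U' ψ) - V (U' ψ) ∈
        (Submodule.span ℂ ((fun U : H →L[ℂ] H => U ψ) '' 𝒰))ᗮ := by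
      rw [Submodule.mem_orthogonal]
      intro u hu
      induction hu using Submodule.span_induction with
      | mem x hx =>
        obtain ⟨U, hU, rfl⟩ := hx
        rw [inner_sub_right, ContinuousLinearMap.adjoint_inner_right, hVU U hU, hVU U' hU',
          key U hU U' hU', sub_self]
      | zero => simp
      | add x y _ _ hx hy => rw [inner_add_left, hx, hy, add_zero]
      | smul c x _ hx => rw [inner_smul_left, hx, mul_zero]
    have : ContinuousLinearMap.adjoint V (U' ψ) - V (U' ψ) = 0 := by
      have hbot : (Submodule.span ℂ ((fun U : H →L[ℂ] H => U ψ) '' 𝒰))ᗮ = ⊥ :=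
        Submodule.topologicalClosure_eq_top_iff.mp hψ.2
      simpa [hbot] using horth
    exact sub_eq_zero.mp this
  -- conclude
  have hstar : star V * V = 1 := (Unitary.mem_iff.mp hV).1
  rw [ContinuousLinearMap.star_eq_adjoint, hadj] at hstar
  exact hstar
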